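/- Let γ > 0 and ρ = −γ (so γ + ρ = 0), and suppose U satisfies the second-order regular variation condition (1.4) with Ψ_{γ,ρ}(x) = ln x. Then for all x > 1 and y > 1, lim_{t→∞} [ ( ln((U(tx) − U(t))/(U(ty) − U(t))) − ln((x^γ − 1)/(y^γ − 1)) ) / A(t) ] = γ ln x/(x^γ − 1) − γ ln y/(y^γ − 1). -/

import Mathlib

/-!
Write `f_x(t) = (U(tx) - U(t)) / a(t)` and `D(x) = (x^γ - 1)/γ`, which is nonzero for `x > 1`.
The second-order condition says `f_x(t) = D(x) + A(t) log x + o(A(t))`, so `f_x(t)/D(x) → 1`, and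
since `log u = (u - 1) + o(u - 1)` as `u → 1`, `log (f_x(t)/D(x)) / A(t) → log x / D(x)`.
The auxiliary function `a(t)` cancels in `f_x(t)/f_y(t)`, which gives the claim by subtraction.
-/

open Filter Real Topology Asymptotics

lemma isLittleO_log_sub_sub_one :
    (fun u => log u - (u - 1)) =o[𝓝 1] fun u => u - 1 := by
  simpa using (hasDerivAt_log one_ne_zero).isLittleO

section

variable {α : Type*} {l : Filter α}

lemma isBigO_of_tendsto_div {g A : α → ℝ} {L : ℝ}
    (hAne : ∀ᶠ t in l, A t ≠ 0) (h : Tendsto (fun t => g t / A t) l (𝓝 L)) :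
    g =O[l] A :=
  isBigO_of_div_tendsto_nhds (hAne.mono fun _ ht h0 => absurd h0 ht) L h

lemma tendsto_of_tendsto_sub_div {f A : α → ℝ} {c L : ℝ}
    (hA : Tendsto A l (𝓝 0)) (hAne : ∀ᶠ t in l, A t ≠ 0)
    (h : Tendsto (fun t => (f t - c) / A t) l (𝓝 L)) :
    Tendsto f l (𝓝 c) := by
  simpa using ((isBigO_of_tendsto_div hAne h).trans_tendsto hA).add_const c

lemma tendsto_log_div_div_of_tendsto_sub_div {f A : α → ℝ} {c L : ℝ}
    (hc : c ≠ 0) (hA : Tendsto A l (𝓝 0)) (hAne : ∀ᶠ t in l, A t ≠ 0)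
    (h : Tendsto (fun t => (f t - c) / A t) l (𝓝 L)) :
    Tendsto (fun t => log (f t / c) / A t) l (𝓝 (L / c)) := by
  have hlin : Tendsto (fun t => (f t / c - 1) / A t) l (𝓝 (L / c)) :=
    (h.div_const c).congr fun t => by field_simp
  have hf : Tendsto (fun t => f t / c) l (𝓝 1) := tendsto_of_tendsto_sub_div hA hAne hlin
  have hrem : (fun t => log (f t / c) - (f t / c - 1)) =o[l] A :=
    (isLittleO_log_sub_sub_one.comp_tendsto hf).trans_isBigO (isBigO_of_tendsto_div hAne hlin)
  simpa [← add_div] using hlin.add hrem.tendsto_div_nhds_zero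

end

lemma log_div_sub_log_div_eq {p q a c d : ℝ} (hp : p ≠ 0) (hq : q ≠ 0) (ha : a ≠ 0)
    (hc : c ≠ 0) (hd : d ≠ 0) :
    log (p / q) - log (c / d) = log (p / a / c) - log (q / a / d) := by
  simp only [log_div, div_ne_zero, hp, hq, ha, hc, hd, ne_eq, not_false_eq_true]
  ring

theorem secondOrder_logRatio_limit_zeroCase_general (U a A : ℝ → ℝ) (γ : ℝ)
    (hγ : 0 < γ)
    (hA0 : Tendsto A atTop (𝓝 0))
    (hAne : ∀ᶠ t in atTop, A t ≠ 0)
    (h2 : ∀ x > (0:ℝ),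
      Tendsto (fun t => ((U (t * x) - U t) / a t - (x ^ γ - 1) / γ) / A t)
        atTop (𝓝 (Real.log x))) :
    ∀ x > (1:ℝ), ∀ y > (1:ℝ),
      Tendsto
        (fun t => (Real.log ((U (t * x) - U t) / (U (t * y) - U t))
            - Real.log ((x ^ γ - 1) / (y ^ γ - 1))) / A t)
        atTop
        (𝓝 (γ * Real.log x / (x ^ γ - 1) - γ * Real.log y / (y ^ γ - 1))) := by
  intro x hx y hy
  have hD : ∀ z > (1:ℝ), (z ^ γ - 1) / γ ≠ 0 := fun z hz =>
    div_ne_zero (sub_ne_zero.2 (one_lt_rpow hz hγ).ne') hγ.ne'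
  have hlim : ∀ z > (1:ℝ),
      Tendsto (fun t => log ((U (t * z) - U t) / a t / ((z ^ γ - 1) / γ)) / A t) atTop
        (𝓝 (γ * log z / (z ^ γ - 1))) := fun z hz => by
    simpa [div_div_eq_mul_div, mul_comm] using
      tendsto_log_div_div_of_tendsto_sub_div (hD z hz) hA0 hAne (h2 z (by linarith))
  have hne : ∀ z > (1:ℝ), ∀ᶠ t in atTop, (U (t * z) - U t) / a t ≠ 0 := fun z hz =>
    (tendsto_of_tendsto_sub_div hA0 hAne (h2 z (by linarith))).eventually_ne (hD z hz)
  refine ((hlim x hx).sub (hlim y hy)).congr' ?_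
  filter_upwards [hne x hx, hne y hy] with t hxt hyt
  obtain ⟨hpx, hat⟩ := div_ne_zero_iff.1 hxt
  rw [← sub_div, ← div_div_div_cancel_right₀ hγ.ne' (x ^ γ - 1) (y ^ γ - 1),
    log_div_sub_log_div_eq hpx (div_ne_zero_iff.1 hyt).1 hat (hD x hx) (hD y hy)]

/-- Lemma 4.2, limit form, case γ+ρ = 0, i.e. ρ = −γ. -/
theorem secondOrder_logRatio_limit_zeroCase (U a A : ℝ → ℝ) (γ ρ : ℝ)
    (hγ : 0 < γ) (hρ : ρ = -γ)
    (ha : ∀ t, 0 < a t)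
    (hA0 : Tendsto A atTop (𝓝 0))
    (hAne : ∀ᶠ t in atTop, A t ≠ 0)
    (hArv : ∀ x > (0:ℝ), Tendsto (fun t => |A (t * x)| / |A t|) atTop (𝓝 (x ^ ρ)))
    (h2 : ∀ x > (0:ℝ),
      Tendsto (fun t => ((U (t * x) - U t) / a t - (x ^ γ - 1) / γ) / A t)
        atTop (𝓝 (Real.log x))) :
    ∀ x > (1:ℝ), ∀ y > (1:ℝ),
      Tendsto
        (fun t => (Real.log ((U (t * x) - U t) / (U (t * y) - U t))
            - Real.log ((x ^ γ - 1) / (y ^ γ - 1))) / A t)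
        atTop
        (𝓝 (γ * Real.log x / (x ^ γ - 1) - γ * Real.log y / (y ^ γ - 1))) :=
  secondOrder_logRatio_limit_zeroCase_general U a A γ hγ hA0 hAne h2
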